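/- arXiv:0704.1633 — 8 statements merged into one kernel-verified Lean document; each statement's English description precedes it below -/
import Mathlib

section
/- Let H be a real Hilbert space and let H_0 ⊆ H_1 and H_0 ⊆ H_2 be closed subspaces such that every vector of H_1 ∩ H_0^⊥ is orthogonal to every vector of H_2 ∩ H_0^⊥. Let K_1 ⊆ H_1 and K_2 ⊆ H_2 be closed subspaces whose orthogonal projections satisfy P_{K_1} x = P_{K_2} x ∈ H_0 for every x ∈ H_0. Then for all v_1, v_1' ∈ H_1 and v_2, v_2' ∈ H_2 with v_1 + v_2 = v_1' + v_2', one has P_{K_1} v_1 + P_{K_2} v_2 = P_{K_1} v_1' + P_{K_2} v_2'; that is, the map P_3(v_1 + v_2) := P_{K_1} v_1 + P_{K_2} v_2 on H_1 + H_2 is well defined. -/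
open scoped RealInnerProductSpace

/-! The difference `w = v₁ - v₁' = v₂' - v₂` lies in `H₁ ∩ H₂`, and `H₁ ∩ H₂ ⊆ H₀` because the
component of `w` orthogonal to `H₀` lies in both `H₁ ∩ H₀ᗮ` and `H₂ ∩ H₀ᗮ`, hence is orthogonal
to itself. On `H₀` the two projections agree, so `P_{K₁} w = P_{K₂} w`. -/

theorem Submodule.map_add_map_eq_of_eqOn_inf {R M N : Type*} [Ring R] [AddCommGroup M]
    [Module R M] [AddCommGroup N] [Module R N] {U V : Submodule R M} (f g : M →ₗ[R] N)
    (hfg : ∀ w ∈ U ⊓ V, f w = g w) {u u' v v' : M} (hu : u ∈ U) (hu' : u' ∈ U)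
    (hv : v ∈ V) (hv' : v' ∈ V) (h : u + v = u' + v') :
    f u + g v = f u' + g v' := by
  have hw : u - u' = v' - v := by rw [sub_eq_sub_iff_add_eq_add, h, add_comm]
  have hfg_w := hfg (u - u') ⟨U.sub_mem hu hu', hw ▸ V.sub_mem hv' hv⟩
  rw [map_sub, hw, map_sub, sub_eq_sub_iff_add_eq_add] at hfg_w
  rw [hfg_w, add_comm]

theorem Submodule.inf_le_of_isOrtho_inf_orthogonal {𝕜 E : Type*} [RCLike 𝕜]
    [NormedAddCommGroup E] [InnerProductSpace 𝕜 E] {K U V : Submodule 𝕜 E}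
    [K.HasOrthogonalProjection] (hU : K ≤ U) (hV : K ≤ V) (h : U ⊓ Kᗮ ⟂ V ⊓ Kᗮ) :
    U ⊓ V ≤ K := by
  rintro w ⟨hwU, hwV⟩
  have hu : w - K.starProjection w ∈ Kᗮ := K.sub_starProjection_mem_orthogonal w
  have hPw : K.starProjection w ∈ K := K.starProjection_apply_mem w
  have hu_zero : w - K.starProjection w = 0 :=
    inner_self_eq_zero.mp <|
      h.inner_eq ⟨U.sub_mem hwU (hU hPw), hu⟩ ⟨V.sub_mem hwV (hV hPw), hu⟩
  exact K.starProjection_eq_self_iff.mp (sub_eq_zero.mp hu_zero).symm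

theorem stmt0_general {H : Type*} [NormedAddCommGroup H] [InnerProductSpace ℝ H]
    (H0 H1 H2 K1 K2 : Submodule ℝ H)
    [CompleteSpace H0]
    [CompleteSpace K1] [CompleteSpace K2]
    (h01 : H0 ≤ H1) (h02 : H0 ≤ H2)
    (horth : ∀ x ∈ H1 ⊓ H0ᗮ, ∀ y ∈ H2 ⊓ H0ᗮ, ⟪x, y⟫ = 0)
    (hproj : ∀ x ∈ H0,
      (K1.orthogonalProjectionOnto x : H) = (K2.orthogonalProjectionOnto x : H) ∧
      (K1.orthogonalProjectionOnto x : H) ∈ H0)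
    (v1 v1' v2 v2' : H)
    (hv1 : v1 ∈ H1) (hv1' : v1' ∈ H1) (hv2 : v2 ∈ H2) (hv2' : v2' ∈ H2)
    (heq : v1 + v2 = v1' + v2') :
    (K1.orthogonalProjectionOnto v1 : H) + (K2.orthogonalProjectionOnto v2 : H) =
      (K1.orthogonalProjectionOnto v1' : H) + (K2.orthogonalProjectionOnto v2' : H) := by
  have hinf : H1 ⊓ H2 ≤ H0 :=
    Submodule.inf_le_of_isOrtho_inf_orthogonal h01 h02 (Submodule.isOrtho_iff_inner_eq.mpr horth)
  exact Submodule.map_add_map_eq_of_eqOn_inf (K1.starProjection : H →ₗ[ℝ] H)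
    (K2.starProjection : H →ₗ[ℝ] H) (fun w hw => (hproj w (hinf hw)).1) hv1 hv1' hv2 hv2' heq

/-- Well-definedness of the amalgamated projection: if `H₀ ⊆ H₁`, `H₀ ⊆ H₂` are closed
subspaces with `H₁ ∩ H₀ᗮ ⟂ H₂ ∩ H₀ᗮ`, and `K₁ ⊆ H₁`, `K₂ ⊆ H₂` are closed subspaces whose
orthogonal projections agree on `H₀` and map `H₀` into `H₀`, then
`P_{K₁} v₁ + P_{K₂} v₂` depends only on `v₁ + v₂`. -/
theorem stmt0 {H : Type*} [NormedAddCommGroup H] [InnerProductSpace ℝ H] [CompleteSpace H]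
    (H0 H1 H2 K1 K2 : Submodule ℝ H)
    [CompleteSpace H0] [CompleteSpace H1] [CompleteSpace H2]
    [CompleteSpace K1] [CompleteSpace K2]
    (h01 : H0 ≤ H1) (h02 : H0 ≤ H2)
    (horth : ∀ x ∈ H1 ⊓ H0ᗮ, ∀ y ∈ H2 ⊓ H0ᗮ, ⟪x, y⟫ = 0)
    (hK1 : K1 ≤ H1) (hK2 : K2 ≤ H2)
    (hproj : ∀ x ∈ H0,
      (K1.orthogonalProjectionOnto x : H) = (K2.orthogonalProjectionOnto x : H) ∧
      (K1.orthogonalProjectionOnto x : H) ∈ H0)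
    (v1 v1' v2 v2' : H)
    (hv1 : v1 ∈ H1) (hv1' : v1' ∈ H1) (hv2 : v2 ∈ H2) (hv2' : v2' ∈ H2)
    (heq : v1 + v2 = v1' + v2') :
    (K1.orthogonalProjectionOnto v1 : H) + (K2.orthogonalProjectionOnto v2 : H) =
      (K1.orthogonalProjectionOnto v1' : H) + (K2.orthogonalProjectionOnto v2' : H) :=
  stmt0_general H0 H1 H2 K1 K2 h01 h02 horth hproj v1 v1' v2 v2' hv1 hv1' hv2 hv2' heq
end

section
/- Let H be a real Hilbert space and let H_0 ⊆ H_1 and H_0 ⊆ H_2 be closed subspaces such that every vector of H_1 ∩ H_0^⊥ is orthogonal to every vector of H_2 ∩ H_0^⊥. Let K_1 ⊆ H_1 and K_2 ⊆ H_2 be closed subspaces whose orthogonal projections satisfy P_{K_1} x = P_{K_2} x ∈ H_0 for every x ∈ H_0, and let K denote the closure of K_1 + K_2. Then for all v_1 ∈ H_1 and v_2 ∈ H_2, P_K(v_1 + v_2) = P_{K_1} v_1 + P_{K_2} v_2. In particular, the amalgamated map P_3(v_1 + v_2) = P_{K_1} v_1 + P_{K_2} v_2 is (the restriction of) an orthogonal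 projection. -/
/-!
For `v ∈ H₂` the residual `z = v - P_{K₂} v` lies in `H₂ ∩ K₂ᗮ`; the heart of the matter is that
it is also orthogonal to `K₁`. Split `z = z₀ + (z - z₀)` with `z₀ = P_{H₀} z`. Since `P_{K₂}` is
self-adjoint and maps `H₀` into itself, `P_{H₀}` preserves `K₂ᗮ`, so `P_{K₁} z₀ = P_{K₂} z₀ = 0`.
The other part lies in `H₂ ∩ H₀ᗮ`, which is orthogonal to all of `H₁ ⊇ K₁`. Hence both residuals
`v_i - P_{K_i} v_i` are orthogonal to `K₁ + K₂` and thus to its closure `K`, which characterises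
`P_K (v₁ + v₂)`.
-/

open scoped RealInnerProductSpace

namespace Submodule

variable {𝕜 E : Type*} [RCLike 𝕜] [NormedAddCommGroup E] [InnerProductSpace 𝕜 E]

open scoped InnerProductSpace in
theorem starProjection_mem_orthogonal_of_mapsTo {K U : Submodule 𝕜 E}
    [K.HasOrthogonalProjection] [U.HasOrthogonalProjection]
    (hU : Set.MapsTo K.starProjection U U) {z : E} (hz : z ∈ Kᗮ) :
    U.starProjection z ∈ Kᗮ := by
  rw [← starProjection_apply_eq_zero_iff]
  set y := K.starProjection (U.starProjection z)
  have hyU : y ∈ U := hU (U.starProjection_apply_mem z)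
  have hyK : y ∈ K := K.starProjection_apply_mem _
  have : ⟪y, y⟫_𝕜 = 0 := calc
    ⟪y, y⟫_𝕜 = ⟪U.starProjection z, y⟫_𝕜 := by
      rw [← sub_eq_zero, ← inner_sub_left, ← neg_sub, inner_neg_left,
        starProjection_inner_eq_zero _ _ hyK, neg_zero]
    _ = ⟪z, y⟫_𝕜 := by
      rw [inner_starProjection_left_eq_right, starProjection_eq_self_iff.mpr hyU]
    _ = 0 := inner_eq_zero_symm.mp (hz y hyK)
  exact inner_self_eq_zero.mp this

theorem isOrtho_inf_orthogonal_of_le {H₀ H₁ H₂ : Submodule 𝕜 E} [H₀.HasOrthogonalProjection]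
    (h₀₁ : H₀ ≤ H₁) (horth : H₁ ⊓ H₀ᗮ ⟂ H₂ ⊓ H₀ᗮ) : H₁ ⟂ H₂ ⊓ H₀ᗮ := by
  rw [← sup_orthogonal_inf_of_hasOrthogonalProjection h₀₁, isOrtho_sup_left]
  exact ⟨(isOrtho_orthogonal_right H₀).mono_right inf_le_right, horth.mono_left (inf_comm _ _).le⟩

theorem isOrtho_inf_orthogonal_of_starProjection_eq {H₀ H₁ H₂ K₁ K₂ : Submodule 𝕜 E}
    [H₀.HasOrthogonalProjection] [K₁.HasOrthogonalProjection] [K₂.HasOrthogonalProjection]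
    (h₀₁ : H₀ ≤ H₁) (h₀₂ : H₀ ≤ H₂) (horth : H₁ ⊓ H₀ᗮ ⟂ H₂ ⊓ H₀ᗮ) (hK₁ : K₁ ≤ H₁)
    (hP : ∀ x ∈ H₀, K₁.starProjection x = K₂.starProjection x)
    (hP₂ : Set.MapsTo K₂.starProjection H₀ H₀) :
    K₁ ⟂ H₂ ⊓ K₂ᗮ := by
  rw [isOrtho_comm]
  intro z ⟨hzH₂, hzK₂⟩
  set z₀ := H₀.starProjection z
  have hz₀ : z₀ ∈ K₁ᗮ := by
    have := starProjection_mem_orthogonal_of_mapsTo hP₂ hzK₂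
    rwa [← starProjection_apply_eq_zero_iff, ← hP _ (H₀.starProjection_apply_mem z),
      starProjection_apply_eq_zero_iff] at this
  have hz₁ : z - z₀ ∈ H₂ ⊓ H₀ᗮ :=
    ⟨H₂.sub_mem hzH₂ (h₀₂ (H₀.starProjection_apply_mem z)), sub_starProjection_mem_orthogonal z⟩
  have : z - z₀ ∈ K₁ᗮ := ((isOrtho_inf_orthogonal_of_le h₀₁ horth).mono_left hK₁).ge hz₁
  simpa using add_mem this hz₀

theorem sub_starProjection_mem_orthogonal_sup {H₁ K₁ K₂ : Submodule 𝕜 E}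
    [K₁.HasOrthogonalProjection] (hK₁ : K₁ ≤ H₁) (h : K₂ ⟂ H₁ ⊓ K₁ᗮ) {v : E} (hv : v ∈ H₁) :
    v - K₁.starProjection v ∈ (K₁ ⊔ K₂)ᗮ := by
  have hres : v - K₁.starProjection v ∈ H₁ ⊓ K₁ᗮ :=
    ⟨H₁.sub_mem hv (hK₁ (K₁.starProjection_apply_mem v)), sub_starProjection_mem_orthogonal v⟩
  rw [← inf_orthogonal]
  exact ⟨hres.2, h.ge hres⟩

end Submodule

open Submodule in
theorem stmt1_general {H : Type*} [NormedAddCommGroup H] [InnerProductSpace ℝ H]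
    (H0 H1 H2 K1 K2 K : Submodule ℝ H)
    [CompleteSpace H0]
    [CompleteSpace K1] [CompleteSpace K2] [CompleteSpace K]
    (h01 : H0 ≤ H1) (h02 : H0 ≤ H2)
    (horth : ∀ x ∈ H1 ⊓ H0ᗮ, ∀ y ∈ H2 ⊓ H0ᗮ, ⟪x, y⟫ = 0)
    (hK1 : K1 ≤ H1) (hK2 : K2 ≤ H2)
    (hproj : ∀ x ∈ H0,
      (Submodule.orthogonalProjectionOnto K1 x : H) = (Submodule.orthogonalProjectionOnto K2 x : H) ∧
      (Submodule.orthogonalProjectionOnto K1 x : H) ∈ H0)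
    (hK : K = (K1 ⊔ K2).topologicalClosure) :
    ∀ v1 ∈ H1, ∀ v2 ∈ H2,
      (Submodule.orthogonalProjectionOnto K (v1 + v2) : H) =
        (Submodule.orthogonalProjectionOnto K1 v1 : H) + (Submodule.orthogonalProjectionOnto K2 v2 : H) := by
  intro v1 hv1 v2 hv2
  simp only [coe_orthogonalProjectionOnto_apply] at hproj ⊢
  have horth₁₂ : H1 ⊓ H0ᗮ ⟂ H2 ⊓ H0ᗮ := isOrtho_iff_inner_eq.mpr horth
  have h₁₂ : K1 ⟂ H2 ⊓ K2ᗮ := isOrtho_inf_orthogonal_of_starProjection_eq h01 h02 horth₁₂ hK1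
    (fun x hx ↦ (hproj x hx).1) (fun x hx ↦ (hproj x hx).1 ▸ (hproj x hx).2)
  have h₂₁ : K2 ⟂ H1 ⊓ K1ᗮ := isOrtho_inf_orthogonal_of_starProjection_eq h02 h01 horth₁₂.symm hK2
    (fun x hx ↦ (hproj x hx).1.symm) (fun x hx ↦ (hproj x hx).2)
  refine eq_starProjection_of_mem_orthogonal ?_ ?_
  · rw [hK]
    exact (K1 ⊔ K2).le_topologicalClosure (add_mem_sup (K1.starProjection_apply_mem v1)
      (K2.starProjection_apply_mem v2))
  · rw [hK, orthogonal_closure, add_sub_add_comm]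
    exact add_mem (sub_starProjection_mem_orthogonal_sup hK1 h₂₁ hv1)
      (sup_comm K2 K1 ▸ sub_starProjection_mem_orthogonal_sup hK2 h₁₂ hv2)

/-- The amalgam of two orthogonal projections extending a common projection is again an
orthogonal projection: with `K` the closure of `K₁ + K₂`,
`P_K (v₁ + v₂) = P_{K₁} v₁ + P_{K₂} v₂` for `v₁ ∈ H₁`, `v₂ ∈ H₂`. -/
theorem stmt1 {H : Type*} [NormedAddCommGroup H] [InnerProductSpace ℝ H] [CompleteSpace H]
    (H0 H1 H2 K1 K2 K : Submodule ℝ H)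
    [CompleteSpace H0] [CompleteSpace H1] [CompleteSpace H2]
    [CompleteSpace K1] [CompleteSpace K2] [CompleteSpace K]
    (h01 : H0 ≤ H1) (h02 : H0 ≤ H2)
    (horth : ∀ x ∈ H1 ⊓ H0ᗮ, ∀ y ∈ H2 ⊓ H0ᗮ, ⟪x, y⟫ = 0)
    (hK1 : K1 ≤ H1) (hK2 : K2 ≤ H2)
    (hproj : ∀ x ∈ H0,
      (Submodule.orthogonalProjectionOnto K1 x : H) = (Submodule.orthogonalProjectionOnto K2 x : H) ∧
      (Submodule.orthogonalProjectionOnto K1 x : H) ∈ H0)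
    (hK : K = (K1 ⊔ K2).topologicalClosure) :
    ∀ v1 ∈ H1, ∀ v2 ∈ H2,
      (Submodule.orthogonalProjectionOnto K (v1 + v2) : H) =
        (Submodule.orthogonalProjectionOnto K1 v1 : H) + (Submodule.orthogonalProjectionOnto K2 v2 : H) :=
  stmt1_general H0 H1 H2 K1 K2 K h01 h02 horth hK1 hK2 hproj hK
end

section
/- Let H be a real Hilbert space and let H_0 ⊆ H_1 be closed subspaces. Let d_1 : H_1 → [0,1] satisfy axiom (2) on H_1 (d_1(y) ≤ d_1(x) + ‖x − y‖ for all x, y ∈ H_1), and suppose the restriction d_0 of d_1 to H_0 satisfies axiom (1) on H_0 (for every x ∈ H_0 with d_0(x) < 1 and every ε > 0 there is y ∈ H_0 with d_0(y) ≤ ε and |d_0(x) − ‖x − y‖| ≤ ε). Then for every v ∈ H_1, d_1(v) ≤ sqrt( d_1(P_{H_0}(v))² + ‖v − P_{H_0}(v)‖² ). -/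
/-!
Let `p` be the projection of `v` onto `H₀`. If `d₁ p ≥ 1` the bound is trivial since `d₁ v ≤ 1`.
Otherwise axiom (1) gives `y ∈ H₀` with `d₁ y ≈ 0` and `‖p - y‖ ≈ d₁ p`; by Pythagoras
`‖v - y‖² = ‖v - p‖² + ‖p - y‖²`, and axiom (2) gives `d₁ v ≤ d₁ y + ‖y - v‖`.
-/

-- Minkowski's inequality for `(a, b) + (e, 0)` in `ℝ²`.
theorem Real.sqrt_add_sq_add_sq_le (a b : ℝ) {e : ℝ} (he : 0 ≤ e) :
    √((a + e) ^ 2 + b ^ 2) ≤ √(a ^ 2 + b ^ 2) + e := by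
  have ha : a ≤ √(a ^ 2 + b ^ 2) := Real.le_sqrt_of_sq_le (by nlinarith)
  have hs : √(a ^ 2 + b ^ 2) ^ 2 = a ^ 2 + b ^ 2 := Real.sq_sqrt (by positivity)
  rw [Real.sqrt_le_left (by positivity)]
  nlinarith

section

variable {H : Type*} [NormedAddCommGroup H] [InnerProductSpace ℝ H]
  (K : Submodule ℝ H) [K.HasOrthogonalProjection]

theorem Submodule.norm_sub_sq_eq_norm_sub_starProjection_sq_add (v : H) {y : H} (hy : y ∈ K) :
    ‖v - y‖ ^ 2 = ‖v - K.starProjection v‖ ^ 2 + ‖K.starProjection v - y‖ ^ 2 := by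
  rw [← sub_add_sub_cancel v (K.starProjection v) y, sq, sq, sq]
  exact norm_add_sq_eq_norm_sq_add_norm_sq_real <| K.inner_left_of_mem_orthogonal
    (K.sub_mem (K.starProjection_apply_mem v) hy) (K.sub_starProjection_mem_orthogonal v)

theorem le_sqrt_apply_starProjection_sq_add_norm_sq {d : H → ℝ} {v : H}
    (hv : ∀ y ∈ K, d v ≤ d y + ‖y - v‖)
    (hnear : ∀ ε > 0, ∃ y ∈ K, d y ≤ ε ∧ ‖K.starProjection v - y‖ ≤ d (K.starProjection v) + ε) :
    d v ≤ √(d (K.starProjection v) ^ 2 + ‖v - K.starProjection v‖ ^ 2) := by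
  set p := K.starProjection v
  refine le_of_forall_pos_le_add fun ε hε ↦ ?_
  obtain ⟨y, hyK, hdy, hpy⟩ := hnear (ε / 2) (half_pos hε)
  have hyv : ‖y - v‖ ≤ √((d p + ε / 2) ^ 2 + ‖v - p‖ ^ 2) := by
    refine Real.le_sqrt_of_sq_le ?_
    rw [norm_sub_rev, K.norm_sub_sq_eq_norm_sub_starProjection_sq_add v hyK, add_comm]
    gcongr
  calc d v ≤ d y + ‖y - v‖ := hv y hyK
    _ ≤ ε / 2 + (√(d p ^ 2 + ‖v - p‖ ^ 2) + ε / 2) := by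
      gcongr
      exact hyv.trans (Real.sqrt_add_sq_add_sq_le _ _ (half_pos hε).le)
    _ = _ := by ring

end

theorem stmt8_general {H : Type*} [NormedAddCommGroup H] [InnerProductSpace ℝ H]
    (H0 H1 : Submodule ℝ H) [CompleteSpace H0] (h01 : H0 ≤ H1)
    (d1 : H → ℝ) (hrange : ∀ x ∈ H1, d1 x ∈ Set.Icc (0 : ℝ) 1)
    (ax2 : ∀ x ∈ H1, ∀ y ∈ H1, d1 y ≤ d1 x + ‖x - y‖)
    (ax1 : ∀ x ∈ H0, d1 x < 1 → ∀ ε > 0, ∃ y ∈ H0, d1 y ≤ ε ∧ |d1 x - ‖x - y‖| ≤ ε) :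
    ∀ v ∈ H1,
      d1 v ≤ Real.sqrt (d1 ((Submodule.orthogonalProjection H0 v : H)) ^ 2 +
        ‖v - (Submodule.orthogonalProjection H0 v : H)‖ ^ 2) := by
  intro v hv
  simp only [Submodule.coe_orthogonalProjectionOnto_apply]
  have hp : H0.starProjection v ∈ H0 := H0.starProjection_apply_mem v
  rcases lt_or_ge (d1 (H0.starProjection v)) 1 with hlt | hge
  · refine le_sqrt_apply_starProjection_sq_add_norm_sq H0 (fun y hy ↦ ax2 y (h01 hy) v hv)
      fun ε hε ↦ ?_
    obtain ⟨y, hy, hdy, hdist⟩ := ax1 _ hp hlt ε hε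
    exact ⟨y, hy, hdy, by linarith [(abs_le.1 hdist).1]⟩
  · calc d1 v ≤ 1 := (hrange v hv).2
      _ ≤ d1 (H0.starProjection v) := hge
      _ ≤ _ := Real.le_sqrt_of_sq_le (le_add_of_nonneg_right (sq_nonneg _))

/-- If `d₁ : H₁ → [0,1]` satisfies axiom (2) on `H₁` and its restriction to the closed
subspace `H₀ ⊆ H₁` satisfies axiom (1) on `H₀`, then for every `v ∈ H₁`,
`d₁ v ≤ sqrt(d₁(P_{H₀} v)² + ‖v - P_{H₀} v‖²)`. -/
theorem stmt8 {H : Type*} [NormedAddCommGroup H] [InnerProductSpace ℝ H] [CompleteSpace H]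
    (H0 H1 : Submodule ℝ H) [CompleteSpace H0] [CompleteSpace H1] (h01 : H0 ≤ H1)
    (d1 : H → ℝ) (hrange : ∀ x ∈ H1, d1 x ∈ Set.Icc (0 : ℝ) 1)
    (ax2 : ∀ x ∈ H1, ∀ y ∈ H1, d1 y ≤ d1 x + ‖x - y‖)
    (ax1 : ∀ x ∈ H0, d1 x < 1 → ∀ ε > 0, ∃ y ∈ H0, d1 y ≤ ε ∧ |d1 x - ‖x - y‖| ≤ ε) :
    ∀ v ∈ H1,
      d1 v ≤ Real.sqrt (d1 ((Submodule.orthogonalProjection H0 v : H)) ^ 2 +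
        ‖v - (Submodule.orthogonalProjection H0 v : H)‖ ^ 2) :=
  stmt8_general H0 H1 h01 d1 hrange ax2 ax1
end

section
/- Let H be a real Hilbert space and let H_0 ⊆ H_1 and H_0 ⊆ H_2 be closed subspaces such that every vector of H_1 ∩ H_0^⊥ is orthogonal to every vector of H_2 ∩ H_0^⊥. Let N_1 ⊆ H_1 and N_2 ⊆ H_2 be nonempty subsets. Then for every v in the closure of H_1 + H_2: dist(v, N_1 ∪ N_2)² = min( dist(P_{H_1}(v), N_1)² + ‖P_{H_2 ∩ H_0^⊥}(v)‖², dist(P_{H_2}(v), N_2)² + ‖P_{H_1 ∩ H_0^⊥}(v)‖² ). -/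
open scoped RealInnerProductSpace

/-!
Since `H₀ ≤ H₁` and `H₁ ⊓ H₀ᗮ ⟂ H₂ ⊓ H₀ᗮ`, the subspace `H₂ ⊓ H₀ᗮ` is orthogonal to all of `H₁`,
and `H₁ ⊔ H₂ = H₁ ⊔ (H₂ ⊓ H₀ᗮ)`. Hence every `v` in the closure of `H₁ ⊔ H₂` splits orthogonally
as `P_{H₁} v + P_{H₂ ⊓ H₀ᗮ} v`, and Pythagoras gives
`dist(v, n)² = dist(P_{H₁} v, n)² + ‖P_{H₂ ⊓ H₀ᗮ} v‖²` for every `n ∈ H₁`. A uniform shift of the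
squared distances passes to the infimum over `N₁`; symmetrically for `N₂`, and the distance to
`N₁ ∪ N₂` is the minimum of the two.
-/

open Metric Submodule

section InfDist

variable {α : Type*} [PseudoMetricSpace α] {s t : Set α} {x x' : α}

theorem Metric.infDist_union (hs : s.Nonempty) (ht : t.Nonempty) :
    infDist x (s ∪ t) = min (infDist x s) (infDist x t) := by
  simp only [infDist, infEDist_union, ENNReal.toReal_min (infEDist_ne_top hs) (infEDist_ne_top ht)]

theorem Metric.infDist_union_sq (hs : s.Nonempty) (ht : t.Nonempty) :
    infDist x (s ∪ t) ^ 2 = min (infDist x s ^ 2) (infDist x t ^ 2) := by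
  rw [infDist_union hs ht]
  exact pow_left_monotoneOn.map_min infDist_nonneg infDist_nonneg

theorem Metric.infDist_sq_le_of_forall_dist_sq_le (hs : s.Nonempty) {c : ℝ}
    (h : ∀ y ∈ s, dist x y ^ 2 ≤ dist x' y ^ 2 + c) :
    infDist x s ^ 2 ≤ infDist x' s ^ 2 + c := by
  -- `√` of a negative number is `0`, so the sign of `infDist x s ^ 2 - c` does not matter.
  have hsqrt : √(infDist x s ^ 2 - c) ≤ infDist x' s := by
    refine (le_infDist hs).2 fun y hy => Real.sqrt_le_iff.2 ⟨dist_nonneg, ?_⟩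
    have hxy := pow_le_pow_left₀ infDist_nonneg (infDist_le_dist_of_mem hy (x := x)) 2
    linarith [h y hy]
  linarith [(Real.sqrt_le_iff.1 hsqrt).2]

theorem Metric.infDist_sq_eq_of_forall_dist_sq_eq (hs : s.Nonempty) {c : ℝ}
    (h : ∀ y ∈ s, dist x y ^ 2 = dist x' y ^ 2 + c) :
    infDist x s ^ 2 = infDist x' s ^ 2 + c := by
  have hle := infDist_sq_le_of_forall_dist_sq_le hs fun y hy => (h y hy).le
  have hge := infDist_sq_le_of_forall_dist_sq_le (x := x') (x' := x) (c := -c) hs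
    fun y hy => by linarith [h y hy]
  linarith

end InfDist

namespace Submodule

variable {𝕜 E : Type*} [RCLike 𝕜] [NormedAddCommGroup E] [InnerProductSpace 𝕜 E]
  {U V W : Submodule 𝕜 E}

theorem isOrtho_of_isOrtho_inf_orthogonal [U.HasOrthogonalProjection] (hUV : U ≤ V)
    (h : V ⊓ Uᗮ ⟂ W ⊓ Uᗮ) : V ⟂ W ⊓ Uᗮ := by
  rw [← sup_orthogonal_inf_of_hasOrthogonalProjection hUV, inf_comm]
  exact isOrtho_sup_left.2 ⟨(isOrtho_orthogonal_right U).mono_right inf_le_right, h⟩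

theorem sup_eq_sup_inf_orthogonal [U.HasOrthogonalProjection] (hUV : U ≤ V) (hUW : U ≤ W) :
    V ⊔ W = V ⊔ W ⊓ Uᗮ := by
  conv_lhs => rw [← sup_orthogonal_inf_of_hasOrthogonalProjection hUW, ← sup_assoc,
    sup_eq_left.2 hUV]
  rw [inf_comm]

variable [U.HasOrthogonalProjection] [V.HasOrthogonalProjection] {v : E}

theorem starProjection_add_starProjection_of_mem_closure (h : U ⟂ V)
    (hv : v ∈ (U ⊔ V).topologicalClosure) : U.starProjection v + V.starProjection v = v := by
  set w := v - U.starProjection v - V.starProjection v with hw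
  have hwU : w ∈ Uᗮ :=
    sub_mem (sub_starProjection_mem_orthogonal v) (h.symm (starProjection_apply_mem V v))
  have hwV : w ∈ Vᗮ := by
    rw [hw, sub_right_comm]
    exact sub_mem (sub_starProjection_mem_orthogonal v) (h (starProjection_apply_mem U v))
  have hw_perp : w ∈ (U ⊔ V).topologicalClosureᗮ := by
    rw [orthogonal_closure, ← inf_orthogonal]
    exact ⟨hwU, hwV⟩
  have hw_mem : w ∈ (U ⊔ V).topologicalClosure :=
    sub_mem (sub_mem hv (le_topologicalClosure _ (mem_sup_left (starProjection_apply_mem U v))))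
      (le_topologicalClosure _ (mem_sup_right (starProjection_apply_mem V v)))
  have hw0 : w = 0 := inner_self_eq_zero.1 (hw_perp w hw_mem)
  rw [hw, sub_sub, sub_eq_zero] at hw0
  exact hw0.symm

theorem dist_sq_eq_dist_starProjection_sq_add (h : U ⟂ V)
    (hv : v ∈ (U ⊔ V).topologicalClosure) {n : E} (hn : n ∈ U) :
    dist v n ^ 2 = dist (U.starProjection v) n ^ 2 + ‖V.starProjection v‖ ^ 2 := by
  have hsplit : v - n = (U.starProjection v - n) + V.starProjection v := by
    conv_lhs => rw [← starProjection_add_starProjection_of_mem_closure h hv]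
    abel
  have hinner : inner 𝕜 (U.starProjection v - n) (V.starProjection v) = 0 :=
    isOrtho_iff_inner_eq.1 h _ (sub_mem (starProjection_apply_mem U v) hn) _
      (starProjection_apply_mem V v)
  simp only [dist_eq_norm, hsplit, sq,
    norm_add_sq_eq_norm_sq_add_norm_sq_of_inner_eq_zero _ _ hinner]

theorem infDist_sq_eq_infDist_starProjection_sq_add (h : U ⟂ V)
    (hv : v ∈ (U ⊔ V).topologicalClosure) {N : Set E} (hN : N.Nonempty) (hNU : N ⊆ U) :
    infDist v N ^ 2 = infDist (U.starProjection v) N ^ 2 + ‖V.starProjection v‖ ^ 2 :=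
  infDist_sq_eq_of_forall_dist_sq_eq hN fun _ hn =>
    dist_sq_eq_dist_starProjection_sq_add h hv (hNU hn)

end Submodule

theorem stmt9_general {H : Type*} [NormedAddCommGroup H] [InnerProductSpace ℝ H]
    (H0 H1 H2 : Submodule ℝ H)
    [CompleteSpace H0] [CompleteSpace H1] [CompleteSpace H2]
    [CompleteSpace ↥(H1 ⊓ H0ᗮ)] [CompleteSpace ↥(H2 ⊓ H0ᗮ)]
    (h01 : H0 ≤ H1) (h02 : H0 ≤ H2)
    (horth : ∀ x ∈ H1 ⊓ H0ᗮ, ∀ y ∈ H2 ⊓ H0ᗮ, ⟪x, y⟫ = 0)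
    (N1 N2 : Set H) (hN1 : N1.Nonempty) (hN2 : N2.Nonempty)
    (hN1H : N1 ⊆ (H1 : Set H)) (hN2H : N2 ⊆ (H2 : Set H)) :
    ∀ v ∈ (H1 ⊔ H2).topologicalClosure,
      Metric.infDist v (N1 ∪ N2) ^ 2 =
        min (Metric.infDist ((Submodule.orthogonalProjectionOnto H1 v : H)) N1 ^ 2 +
              ‖(Submodule.orthogonalProjectionOnto (H2 ⊓ H0ᗮ) v : H)‖ ^ 2)
            (Metric.infDist ((Submodule.orthogonalProjectionOnto H2 v : H)) N2 ^ 2 +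
              ‖(Submodule.orthogonalProjectionOnto (H1 ⊓ H0ᗮ) v : H)‖ ^ 2) := by
  intro v hv
  have horth' : H1 ⊓ H0ᗮ ⟂ H2 ⊓ H0ᗮ := isOrtho_iff_inner_eq.2 horth
  have hv1 : v ∈ (H1 ⊔ H2 ⊓ H0ᗮ).topologicalClosure := by
    rwa [← sup_eq_sup_inf_orthogonal h01 h02]
  have hv2 : v ∈ (H2 ⊔ H1 ⊓ H0ᗮ).topologicalClosure := by
    rwa [← sup_eq_sup_inf_orthogonal h02 h01, sup_comm]
  simp only [coe_orthogonalProjectionOnto_apply]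
  rw [infDist_union_sq hN1 hN2,
    infDist_sq_eq_infDist_starProjection_sq_add
      (isOrtho_of_isOrtho_inf_orthogonal h01 horth') hv1 hN1 hN1H,
    infDist_sq_eq_infDist_starProjection_sq_add
      (isOrtho_of_isOrtho_inf_orthogonal h02 horth'.symm) hv2 hN2 hN2H]

/-- Free amalgamation formula for the distance to the union of two random subsets:
if `H₁ ∩ H₀ᗮ ⟂ H₂ ∩ H₀ᗮ` and `N₁ ⊆ H₁`, `N₂ ⊆ H₂` are nonempty, then for every `v` in the
closure of `H₁ + H₂`,
`dist(v, N₁ ∪ N₂)² = min(dist(P_{H₁}v, N₁)² + ‖P_{H₂⊓H₀ᗮ}v‖², dist(P_{H₂}v, N₂)² + ‖P_{H₁⊓H₀ᗮ}v‖²)`. -/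
theorem stmt9 {H : Type*} [NormedAddCommGroup H] [InnerProductSpace ℝ H] [CompleteSpace H]
    (H0 H1 H2 : Submodule ℝ H)
    [CompleteSpace H0] [CompleteSpace H1] [CompleteSpace H2]
    [CompleteSpace ↥(H1 ⊓ H0ᗮ)] [CompleteSpace ↥(H2 ⊓ H0ᗮ)]
    (h01 : H0 ≤ H1) (h02 : H0 ≤ H2)
    (horth : ∀ x ∈ H1 ⊓ H0ᗮ, ∀ y ∈ H2 ⊓ H0ᗮ, ⟪x, y⟫ = 0)
    (N1 N2 : Set H) (hN1 : N1.Nonempty) (hN2 : N2.Nonempty)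
    (hN1H : N1 ⊆ (H1 : Set H)) (hN2H : N2 ⊆ (H2 : Set H)) :
    ∀ v ∈ (H1 ⊔ H2).topologicalClosure,
      Metric.infDist v (N1 ∪ N2) ^ 2 =
        min (Metric.infDist ((Submodule.orthogonalProjectionOnto H1 v : H)) N1 ^ 2 +
              ‖(Submodule.orthogonalProjectionOnto (H2 ⊓ H0ᗮ) v : H)‖ ^ 2)
            (Metric.infDist ((Submodule.orthogonalProjectionOnto H2 v : H)) N2 ^ 2 +
              ‖(Submodule.orthogonalProjectionOnto (H1 ⊓ H0ᗮ) v : H)‖ ^ 2) :=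
  stmt9_general H0 H1 H2 h01 h02 horth N1 N2 hN1 hN2 hN1H hN2H
end

section
/- Let H be a real Hilbert space and let v_1, …, v_n, u_1, …, u_n be 2n orthonormal vectors in H (n ≥ 1). Let N = { (u_i + v_j)/2 : 1 ≤ j < i ≤ n } ∪ {0} and define d(x) = min(1, dist(x, N)). Then d(0) = 0, d((u_i + v_j)/2) = 0 whenever i > j, and d((u_i + v_j)/2) = √2/2 whenever i ≤ j. -/
/-!
Writing `p i j = (uᵢ + vⱼ)/2`, orthonormality gives `⟪p i j, p i' j'⟫ = ([i = i'] + [j = j'])/4`.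
Hence every `p i j` has norm `√2/2`, and two distinct such points are at distance at least `√2/2`.
For `i ≤ j` the point `p i j` is not in `N`, so its nearest point in `N` is `0`, at distance `√2/2`.
-/

open scoped RealInnerProductSpace

lemma Metric.infDist_eq_dist_of_forall_dist_le {α : Type*} [PseudoMetricSpace α] {s : Set α}
    {x y : α} (hy : y ∈ s) (h : ∀ z ∈ s, dist x y ≤ dist x z) : Metric.infDist x s = dist x y :=
  le_antisymm (Metric.infDist_le_dist_of_mem hy) ((Metric.le_infDist ⟨y, hy⟩).2 h)

namespace Orthonormal

variable {H ι κ : Type*} [NormedAddCommGroup H] [InnerProductSpace ℝ H] {v : ι → H} {u : κ → H}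

lemma inner_half_add_half_add [DecidableEq ι] [DecidableEq κ] (hon : Orthonormal ℝ (Sum.elim v u))
    (i i' : κ) (j j' : ι) :
    ⟪(1/2 : ℝ) • (u i + v j), (1/2 : ℝ) • (u i' + v j')⟫ =
      ((if i = i' then 1 else 0) + (if j = j' then 1 else 0)) / 4 := by
  have hite := orthonormal_iff_ite.mp hon
  have huu := hite (Sum.inr i) (Sum.inr i')
  have hvv := hite (Sum.inl j) (Sum.inl j')
  have huv := hite (Sum.inr i) (Sum.inl j')
  have hvu := hite (Sum.inl j) (Sum.inr i')
  simp only [Sum.elim_inl, Sum.elim_inr, Sum.inl.injEq, Sum.inr.injEq, reduceCtorEq,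
    if_false] at huu hvv huv hvu
  simp only [real_inner_smul_left, real_inner_smul_right, inner_add_left, inner_add_right,
    huu, hvv, huv, hvu]
  ring

lemma norm_half_add (hon : Orthonormal ℝ (Sum.elim v u)) (i : κ) (j : ι) :
    ‖(1/2 : ℝ) • (u i + v j)‖ = √2 / 2 := by
  classical
  refine (sq_eq_sq₀ (norm_nonneg _) (by positivity)).1 ?_
  rw [← real_inner_self_eq_norm_sq, hon.inner_half_add_half_add, div_pow, Real.sq_sqrt zero_le_two]
  norm_num

lemma sqrt_two_div_two_le_norm_half_add_sub (hon : Orthonormal ℝ (Sum.elim v u)) {i i' : κ}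
    {j j' : ι} (hne : ¬(i = i' ∧ j = j')) :
    √2 / 2 ≤ ‖(1/2 : ℝ) • (u i + v j) - (1/2 : ℝ) • (u i' + v j')‖ := by
  classical
  refine (sq_le_sq₀ (by positivity) (norm_nonneg _)).1 ?_
  rw [norm_sub_sq_real, hon.norm_half_add, hon.norm_half_add, hon.inner_half_add_half_add,
    div_pow, Real.sq_sqrt zero_le_two]
  split_ifs <;> norm_num
  tauto

end Orthonormal

theorem stmt11_general {H : Type*} [NormedAddCommGroup H] [InnerProductSpace ℝ H]
    (n : ℕ) (v u : Fin n → H)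
    (hon : Orthonormal ℝ (Sum.elim v u))
    (N : Set H)
    (hN : N = {x : H | ∃ i j : Fin n, (j : ℕ) < (i : ℕ) ∧ x = (1/2 : ℝ) • (u i + v j)} ∪ {0})
    (d : H → ℝ) (hd : ∀ x, d x = min 1 (Metric.infDist x N)) :
    d 0 = 0 ∧
    (∀ i j : Fin n, (j : ℕ) < (i : ℕ) → d ((1/2 : ℝ) • (u i + v j)) = 0) ∧
    (∀ i j : Fin n, (i : ℕ) ≤ (j : ℕ) → d ((1/2 : ℝ) • (u i + v j)) = Real.sqrt 2 / 2) := by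
  have h0 : (0 : H) ∈ N := hN ▸ Or.inr rfl
  refine ⟨?_, fun i j hji => ?_, fun i j hij => ?_⟩
  · rw [hd, Metric.infDist_zero_of_mem h0, min_eq_right zero_le_one]
  · rw [hd, Metric.infDist_zero_of_mem (hN ▸ Or.inl ⟨i, j, hji, rfl⟩), min_eq_right zero_le_one]
  · have hx : dist ((1/2 : ℝ) • (u i + v j)) 0 = √2 / 2 := by
      rw [dist_zero_right, hon.norm_half_add]
    have hdist : Metric.infDist ((1/2 : ℝ) • (u i + v j)) N = √2 / 2 := by
      refine (Metric.infDist_eq_dist_of_forall_dist_le h0 ?_).trans hx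
      rw [hx, hN]
      rintro z (⟨i', j', hji', rfl⟩ | rfl)
      · rw [dist_eq_norm]
        refine hon.sqrt_two_div_two_le_norm_half_add_sub ?_
        rintro ⟨rfl, rfl⟩
        omega
      · exact hx.ge
    rw [hd, hdist, min_eq_right]
    linarith [Real.sqrt_two_lt_three_halves]

/-- The order-coding model of `T₀`: for orthonormal `v₁,…,vₙ,u₁,…,uₙ` and
`N = {(uᵢ + vⱼ)/2 : j < i} ∪ {0}`, the truncated distance `d(x) = min(1, dist(x, N))`
satisfies `d 0 = 0`, `d((uᵢ+vⱼ)/2) = 0` for `i > j` and `d((uᵢ+vⱼ)/2) = √2/2` for `i ≤ j`. -/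
theorem stmt11 {H : Type*} [NormedAddCommGroup H] [InnerProductSpace ℝ H] [CompleteSpace H]
    (n : ℕ) (hn : 1 ≤ n) (v u : Fin n → H)
    (hon : Orthonormal ℝ (Sum.elim v u))
    (N : Set H)
    (hN : N = {x : H | ∃ i j : Fin n, (j : ℕ) < (i : ℕ) ∧ x = (1/2 : ℝ) • (u i + v j)} ∪ {0})
    (d : H → ℝ) (hd : ∀ x, d x = min 1 (Metric.infDist x N)) :
    d 0 = 0 ∧
    (∀ i j : Fin n, (j : ℕ) < (i : ℕ) → d ((1/2 : ℝ) • (u i + v j)) = 0) ∧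
    (∀ i j : Fin n, (i : ℕ) ≤ (j : ℕ) → d ((1/2 : ℝ) • (u i + v j)) = Real.sqrt 2 / 2) :=
  stmt11_general n v u hon N hN d hd
end

section
/- Let H be a real Hilbert space, let I, J, S be index sets, and let {b_i : i ∈ I} ∪ {a_j : j ∈ J} ∪ {c_s : s ∈ S} be an orthonormal family in H (all vectors pairwise distinct and orthonormal). For each s ∈ S let g_s : I → J be injective. Let N = { c_s + b_i + (1/2) a_{g_s(i)} : s ∈ S, i ∈ I } ∪ {0}. Then for every s ∈ S and ℓ ∈ I, dist( c_s + b_ℓ − (1/2) a_{g_s(ℓ)}, N ) = 1; in particular ‖(c_s + b_ℓ − (1/2) a_{g_s(ℓ)}) − y‖ ≥ 1 for every y ∈ N, with equality for y = c_s + b_ℓ + (1/2) a_{g_s(ℓ)}. -/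
/-!
Every point `y` of `N` is detected by one unit vector `e` of the orthonormal family with
`⟪x - y, e⟫ = ±1`, where `x = cₛ + b_ℓ - ½ a_{gₛ(ℓ)}`: the vector `cₛ` for `y = 0` and for
`y = c_t + …` with `t ≠ s`, the vector `b_ℓ` for `y = cₛ + bᵢ + …` with `i ≠ ℓ`, and for
`y = cₛ + b_ℓ + ½ a_{gₛ(ℓ)}` the difference is `-a_{gₛ(ℓ)}` itself. Hence `‖x - y‖ ≥ 1`, with
equality at that last point.
-/

open scoped RealInnerProductSpace

theorem Metric.infDist_eq_of_mem_of_forall_le {α : Type*} [PseudoMetricSpace α] {x y₀ : α}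
    {s : Set α} {r : ℝ} (hy₀ : y₀ ∈ s) (hdist : dist x y₀ = r) (hle : ∀ y ∈ s, r ≤ dist x y) :
    Metric.infDist x s = r :=
  le_antisymm (hdist ▸ Metric.infDist_le_dist_of_mem hy₀) ((Metric.le_infDist ⟨y₀, hy₀⟩).2 hle)

section Orthonormal

variable {H : Type*} [NormedAddCommGroup H] [InnerProductSpace ℝ H]

theorem one_le_norm_of_inner_eq_one {z e : H} (he : ‖e‖ = 1) (h : ⟪z, e⟫ = 1) : 1 ≤ ‖z‖ :=
  calc 1 = ⟪z, e⟫ := h.symm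
    _ ≤ ‖z‖ * ‖e‖ := real_inner_le_norm z e
    _ = ‖z‖ := by rw [he, mul_one]

variable {I J S : Type*} {b : I → H} {a : J → H} {c : S → H}

theorem inner_add_add_smul_inl_of_orthonormal [DecidableEq I]
    (hon : Orthonormal ℝ (Sum.elim b (Sum.elim a c))) (t : S) (i : I) (r : ℝ) (j : J) (ℓ : I) :
    ⟪c t + b i + r • a j, b ℓ⟫ = if i = ℓ then 1 else 0 := by
  classical
  have h := orthonormal_iff_ite.mp hon
  have hcb : ⟪c t, b ℓ⟫ = 0 := by simpa using h (.inr (.inr t)) (.inl ℓ)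
  have hbb : ⟪b i, b ℓ⟫ = if i = ℓ then 1 else 0 := by simpa using h (.inl i) (.inl ℓ)
  have hab : ⟪a j, b ℓ⟫ = 0 := by simpa using h (.inr (.inl j)) (.inl ℓ)
  rw [inner_add_left, inner_add_left, real_inner_smul_left, hcb, hbb, hab]
  ring

theorem inner_add_add_smul_inr_inr_of_orthonormal [DecidableEq S]
    (hon : Orthonormal ℝ (Sum.elim b (Sum.elim a c))) (t : S) (i : I) (r : ℝ) (j : J) (s : S) :
    ⟪c t + b i + r • a j, c s⟫ = if t = s then 1 else 0 := by
  classical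
  have h := orthonormal_iff_ite.mp hon
  have hcc : ⟪c t, c s⟫ = if t = s then 1 else 0 := by simpa using h (.inr (.inr t)) (.inr (.inr s))
  have hbc : ⟪b i, c s⟫ = 0 := by simpa using h (.inl i) (.inr (.inr s))
  have hac : ⟪a j, c s⟫ = 0 := by simpa using h (.inr (.inl j)) (.inr (.inr s))
  rw [inner_add_left, inner_add_left, real_inner_smul_left, hcc, hbc, hac]
  ring

theorem one_le_norm_add_add_smul_of_orthonormal
    (hon : Orthonormal ℝ (Sum.elim b (Sum.elim a c))) (s : S) (ℓ : I) (r : ℝ) (j : J) :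
    1 ≤ ‖c s + b ℓ + r • a j‖ := by
  classical
  refine one_le_norm_of_inner_eq_one (e := c s) (by simpa using hon.norm_eq_one (.inr (.inr s))) ?_
  simp [inner_add_add_smul_inr_inr_of_orthonormal hon]

theorem norm_sub_eq_one_of_orthonormal (hon : Orthonormal ℝ (Sum.elim b (Sum.elim a c)))
    (s : S) (ℓ : I) (j : J) :
    ‖(c s + b ℓ - (1/2 : ℝ) • a j) - (c s + b ℓ + (1/2 : ℝ) • a j)‖ = 1 := by
  rw [show (c s + b ℓ - (1/2 : ℝ) • a j) - (c s + b ℓ + (1/2 : ℝ) • a j) = -a j by module,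
    norm_neg]
  simpa using hon.norm_eq_one (.inr (.inl j))

theorem one_le_norm_sub_of_orthonormal (hon : Orthonormal ℝ (Sum.elim b (Sum.elim a c)))
    (g : S → I → J) (s t : S) (ℓ i : I) :
    1 ≤ ‖(c s + b ℓ - (1/2 : ℝ) • a (g s ℓ)) - (c t + b i + (1/2 : ℝ) • a (g t i))‖ := by
  classical
  have hx : c s + b ℓ - (1/2 : ℝ) • a (g s ℓ) = c s + b ℓ + (-1/2 : ℝ) • a (g s ℓ) := by module
  rcases eq_or_ne t s with rfl | hts
  · rcases eq_or_ne i ℓ with rfl | hiℓ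
    · exact (norm_sub_eq_one_of_orthonormal hon t i (g t i)).ge
    · refine one_le_norm_of_inner_eq_one (e := b ℓ) (by simpa using hon.norm_eq_one (.inl ℓ)) ?_
      rw [hx, inner_sub_left, inner_add_add_smul_inl_of_orthonormal hon,
        inner_add_add_smul_inl_of_orthonormal hon]
      simp [hiℓ]
  · refine one_le_norm_of_inner_eq_one (e := c s) (by simpa using hon.norm_eq_one (.inr (.inr s))) ?_
    rw [hx, inner_sub_left, inner_add_add_smul_inr_inr_of_orthonormal hon,
      inner_add_add_smul_inr_inr_of_orthonormal hon]
    simp [hts]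

end Orthonormal

theorem stmt12_general {H : Type*} [NormedAddCommGroup H] [InnerProductSpace ℝ H]
    {I J S : Type*} (b : I → H) (a : J → H) (c : S → H)
    (hon : Orthonormal ℝ (Sum.elim b (Sum.elim a c)))
    (g : S → I → J)
    (N : Set H)
    (hN : N = {x : H | ∃ s i, x = c s + b i + (1/2 : ℝ) • a (g s i)} ∪ {0}) :
    ∀ (s : S) (ℓ : I),
      Metric.infDist (c s + b ℓ - (1/2 : ℝ) • a (g s ℓ)) N = 1 ∧
      (∀ y ∈ N, 1 ≤ ‖(c s + b ℓ - (1/2 : ℝ) • a (g s ℓ)) - y‖) ∧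
      ‖(c s + b ℓ - (1/2 : ℝ) • a (g s ℓ)) - (c s + b ℓ + (1/2 : ℝ) • a (g s ℓ))‖ = 1 := by
  intro s ℓ
  have hfar : ∀ y ∈ N, 1 ≤ ‖(c s + b ℓ - (1/2 : ℝ) • a (g s ℓ)) - y‖ := by
    rw [hN]
    rintro y (⟨t, i, rfl⟩ | rfl)
    · exact one_le_norm_sub_of_orthonormal hon g s t ℓ i
    · rw [sub_zero, sub_eq_add_neg, ← neg_smul]
      exact one_le_norm_add_add_smul_of_orthonormal hon s ℓ _ _
  have hnear := norm_sub_eq_one_of_orthonormal hon s ℓ (g s ℓ)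
  have hmem : c s + b ℓ + (1/2 : ℝ) • a (g s ℓ) ∈ N := hN ▸ Or.inl ⟨s, ℓ, rfl⟩
  refine ⟨Metric.infDist_eq_of_mem_of_forall_le hmem ?_ ?_, hfar, hnear⟩
  · rw [dist_eq_norm, hnear]
  · simpa only [dist_eq_norm] using hfar

/-- Core computation in the proof that `T_N` is not simple: with an orthonormal family
`{bᵢ} ∪ {aⱼ} ∪ {cₛ}` and injections `gₛ : I → J`, the black set
`N = {cₛ + bᵢ + (1/2)a_{gₛ(i)}} ∪ {0}` satisfies
`dist(cₛ + b_ℓ − (1/2)a_{gₛ(ℓ)}, N) = 1`, every point of `N` is at distance `≥ 1`, with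
equality at `cₛ + b_ℓ + (1/2)a_{gₛ(ℓ)}`. -/
theorem stmt12 {H : Type*} [NormedAddCommGroup H] [InnerProductSpace ℝ H] [CompleteSpace H]
    {I J S : Type*} (b : I → H) (a : J → H) (c : S → H)
    (hon : Orthonormal ℝ (Sum.elim b (Sum.elim a c)))
    (g : S → I → J) (hg : ∀ s, Function.Injective (g s))
    (N : Set H)
    (hN : N = {x : H | ∃ s i, x = c s + b i + (1/2 : ℝ) • a (g s i)} ∪ {0}) :
    ∀ (s : S) (ℓ : I),
      Metric.infDist (c s + b ℓ - (1/2 : ℝ) • a (g s ℓ)) N = 1 ∧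
      (∀ y ∈ N, 1 ≤ ‖(c s + b ℓ - (1/2 : ℝ) • a (g s ℓ)) - y‖) ∧
      ‖(c s + b ℓ - (1/2 : ℝ) • a (g s ℓ)) - (c s + b ℓ + (1/2 : ℝ) • a (g s ℓ))‖ = 1 :=
  stmt12_general b a c hon g N hN
end

section
/- Let H be a real Hilbert space and let C ⊆ E and C ⊆ F be closed subspaces. Then the following are equivalent: (i) P_F(a) = P_C(a) for every a ∈ E; (ii) P_E(b) = P_C(b) for every b ∈ F; (iii) every vector of E ∩ C^⊥ is orthogonal to every vector of F ∩ C^⊥. -/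
open scoped RealInnerProductSpace

/-!
Since `C ≤ F`, `P_F a = P_C a` says exactly that `a - P_C a ⊥ F`. As `F = C ⊕ (F ⊓ Cᗮ)` and
`a - P_C a ∈ Cᗮ`, this is orthogonality to `F ⊓ Cᗮ`. For `a ∈ E` the vectors `a - P_C a`
exhaust `E ⊓ Cᗮ`, so (i) says `E ⊓ Cᗮ ⟂ F ⊓ Cᗮ`, which is (iii); this condition is symmetric
in `E` and `F`, whence (ii).
-/

namespace Submodule

variable {𝕜 H : Type*} [RCLike 𝕜] [NormedAddCommGroup H] [InnerProductSpace 𝕜 H]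

theorem starProjection_eq_starProjection_iff_of_le {K₁ K₂ : Submodule 𝕜 H}
    [K₁.HasOrthogonalProjection] [K₂.HasOrthogonalProjection] (h : K₁ ≤ K₂) (v : H) :
    K₂.starProjection v = K₁.starProjection v ↔ v - K₁.starProjection v ∈ K₂ᗮ := by
  refine ⟨fun hv ↦ ?_, eq_starProjection_of_mem_orthogonal (h (K₁.starProjection_apply_mem v))⟩
  rw [← hv]
  exact K₂.sub_starProjection_mem_orthogonal v

theorem isOrtho_iff_isOrtho_orthogonal_inf {K₁ K₂ U : Submodule 𝕜 H} [K₁.HasOrthogonalProjection]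
    (h : K₁ ≤ K₂) (hU : U ≤ K₁ᗮ) : U ⟂ K₂ ↔ U ⟂ K₁ᗮ ⊓ K₂ := by
  conv_lhs => rw [← sup_orthogonal_inf_of_hasOrthogonalProjection h]
  rw [isOrtho_sup_right, and_iff_right ((isOrtho_orthogonal_left K₁).mono_left hU)]

theorem forall_starProjection_eq_iff_isOrtho {C E F : Submodule 𝕜 H}
    [C.HasOrthogonalProjection] [F.HasOrthogonalProjection] (hCE : C ≤ E) (hCF : C ≤ F) :
    (∀ a ∈ E, F.starProjection a = C.starProjection a) ↔ E ⊓ Cᗮ ⟂ F ⊓ Cᗮ := by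
  rw [inf_comm F, ← isOrtho_iff_isOrtho_orthogonal_inf hCF inf_le_right]
  simp only [starProjection_eq_starProjection_iff_of_le hCF]
  constructor
  · rintro h x ⟨hxE, hxC⟩
    simpa only [(C.starProjection_apply_eq_zero_iff).mpr hxC, sub_zero] using h x hxE
  · intro h a ha
    exact h ⟨E.sub_mem ha (hCE (C.starProjection_apply_mem a)),
      C.sub_starProjection_mem_orthogonal a⟩

end Submodule

theorem stmt15_general {H : Type*} [NormedAddCommGroup H] [InnerProductSpace ℝ H]
    (C E F : Submodule ℝ H) [CompleteSpace C] [CompleteSpace E] [CompleteSpace F]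
    (hCE : C ≤ E) (hCF : C ≤ F) :
    ((∀ a ∈ E, (Submodule.orthogonalProjectionOnto F a : H) = (Submodule.orthogonalProjectionOnto C a : H)) ↔
      (∀ b ∈ F, (Submodule.orthogonalProjectionOnto E b : H) = (Submodule.orthogonalProjectionOnto C b : H))) ∧
    ((∀ a ∈ E, (Submodule.orthogonalProjectionOnto F a : H) = (Submodule.orthogonalProjectionOnto C a : H)) ↔
      (∀ x ∈ E ⊓ Cᗮ, ∀ y ∈ F ⊓ Cᗮ, ⟪x, y⟫ = 0)) := by
  have hE := Submodule.forall_starProjection_eq_iff_isOrtho hCE hCF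
  have hF := Submodule.forall_starProjection_eq_iff_isOrtho hCF hCE
  exact ⟨hE.trans (Submodule.isOrtho_comm.trans hF.symm),
    hE.trans Submodule.isOrtho_iff_inner_eq⟩

/-- Equivalent formulations of Hilbert-space independence of `E` and `F` over a common
closed subspace `C`: (i) `P_F = P_C` on `E`; (ii) `P_E = P_C` on `F`;
(iii) `E ⊓ Cᗮ ⟂ F ⊓ Cᗮ`. -/
theorem stmt15 {H : Type*} [NormedAddCommGroup H] [InnerProductSpace ℝ H] [CompleteSpace H]
    (C E F : Submodule ℝ H) [CompleteSpace C] [CompleteSpace E] [CompleteSpace F]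
    (hCE : C ≤ E) (hCF : C ≤ F) :
    ((∀ a ∈ E, (Submodule.orthogonalProjectionOnto F a : H) = (Submodule.orthogonalProjectionOnto C a : H)) ↔
      (∀ b ∈ F, (Submodule.orthogonalProjectionOnto E b : H) = (Submodule.orthogonalProjectionOnto C b : H))) ∧
    ((∀ a ∈ E, (Submodule.orthogonalProjectionOnto F a : H) = (Submodule.orthogonalProjectionOnto C a : H)) ↔
      (∀ x ∈ E ⊓ Cᗮ, ∀ y ∈ F ⊓ Cᗮ, ⟪x, y⟫ = 0)) :=
  stmt15_general C E F hCE hCF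
end

section
/- Let H be a real Hilbert space and let H_0 ⊆ H_1 and H_0 ⊆ H_2 be closed subspaces such that every vector of H_1 ∩ H_0^⊥ is orthogonal to every vector of H_2 ∩ H_0^⊥. Let d_1 : H_1 → [0,1] and d_2 : H_2 → [0,1] each satisfy d_i(y) ≤ d_i(x) + ‖x − y‖ on their domains. Define, for v in the closure H_3 of H_1 + H_2, d_3(v) = min( sqrt( d_1(P_{H_1}(v))² + ‖P_{H_2 ∩ H_0^⊥}(v)‖² ), sqrt( d_2(P_{H_2}(v))² + ‖P_{H_1 ∩ H_0^⊥}(v)‖² ) ). Then d_3 satisfies axiom (2) on H_3: d_3(y) ≤ d_3(x) + ‖x − y‖ for all x, y ∈ H_3. -/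
/-!
Write `f₁ v = √(d₁(P_{H₁} v)² + ‖P_{H₂ ⊓ H₀ᗮ} v‖²)`, so that `d₃ = min f₁ f₂`. Since
`H₁ = H₀ ⊔ (H₁ ⊓ H₀ᗮ)`, the hypothesis makes `H₂ ⊓ H₀ᗮ` orthogonal to all of `H₁`, hence
`‖P_{H₁} z‖² + ‖P_{H₂ ⊓ H₀ᗮ} z‖² ≤ ‖z‖²`. Each coordinate of the pair
`(d₁(P_{H₁} v), ‖P_{H₂ ⊓ H₀ᗮ} v‖)` moves by at most the corresponding projection of `x - y`,
so Minkowski's inequality in `ℝ²` shows that `f₁` is 1-Lipschitz; so is `f₂`, and hence their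
minimum.
-/

open scoped RealInnerProductSpace

lemma Real.sqrt_sq_add_sq_le_of_le_add {a b u w a' b' : ℝ} (ha' : 0 ≤ a') (hb' : 0 ≤ b')
    (ha : a' ≤ a + u) (hb : b' ≤ b + w) :
    √(a' ^ 2 + b' ^ 2) ≤ √(a ^ 2 + b ^ 2) + √(u ^ 2 + w ^ 2) := by
  have hmono : √(a' ^ 2 + b' ^ 2) ≤ √((a + u) ^ 2 + (b + w) ^ 2) := by gcongr
  have htri := norm_add_le (⟨a, b⟩ : ℂ) ⟨u, w⟩
  simp only [Complex.norm_eq_sqrt_sq_add_sq] at htri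
  exact hmono.trans htri

namespace Submodule

variable {E : Type*} [NormedAddCommGroup E] [InnerProductSpace ℝ E]

lemma le_orthogonal_of_isOrtho_inf_orthogonal {K₀ K L : Submodule ℝ E}
    [K₀.HasOrthogonalProjection] (hK₀ : K₀ ≤ K) (hL : L ≤ K₀ᗮ) (hKL : K ⊓ K₀ᗮ ⟂ L) :
    L ≤ Kᗮ := by
  rw [← isOrtho_iff_le, ← sup_orthogonal_inf_of_hasOrthogonalProjection hK₀, inf_comm,
    isOrtho_sup_right]
  exact ⟨isOrtho_orthogonal_left K₀ |>.mono_left hL, hKL.symm⟩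

lemma sq_norm_orthogonalProjectionOnto_add_sq_norm_le {K L : Submodule ℝ E}
    [K.HasOrthogonalProjection] [L.HasOrthogonalProjection] (hL : L ≤ Kᗮ) (z : E) :
    ‖K.orthogonalProjectionOnto z‖ ^ 2 + ‖L.orthogonalProjectionOnto z‖ ^ 2 ≤ ‖z‖ ^ 2 := by
  have hLz : ‖L.orthogonalProjectionOnto z‖ ≤ ‖Kᗮ.orthogonalProjectionOnto z‖ := by
    rw [← orthogonalProjectionOnto_starProjection_of_le hL]
    exact norm_orthogonalProjectionOnto_apply_le L _
  rw [norm_sq_eq_add_norm_sq_projection z K]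
  gcongr

lemma sqrt_sq_add_sq_norm_orthogonalProjectionOnto_le {K L : Submodule ℝ E}
    [K.HasOrthogonalProjection] [L.HasOrthogonalProjection] (hL : L ≤ Kᗮ) {d : E → ℝ}
    (hd₀ : ∀ v ∈ K, 0 ≤ d v) (hd : ∀ u ∈ K, ∀ v ∈ K, d v ≤ d u + ‖u - v‖) (x y : E) :
    √(d (K.orthogonalProjectionOnto y) ^ 2 + ‖(L.orthogonalProjectionOnto y : E)‖ ^ 2) ≤
      √(d (K.orthogonalProjectionOnto x) ^ 2 + ‖(L.orthogonalProjectionOnto x : E)‖ ^ 2) +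
        ‖x - y‖ := by
  have hK : d (K.orthogonalProjectionOnto y) ≤
      d (K.orthogonalProjectionOnto x) + ‖K.orthogonalProjectionOnto (x - y)‖ := by
    rw [map_sub]
    exact hd _ (coe_mem _) _ (coe_mem _)
  have hL' : ‖(L.orthogonalProjectionOnto y : E)‖ ≤
      ‖(L.orthogonalProjectionOnto x : E)‖ + ‖L.orthogonalProjectionOnto (x - y)‖ := by
    rw [map_sub]
    exact norm_le_norm_add_norm_sub _ _
  have hxy : √(‖K.orthogonalProjectionOnto (x - y)‖ ^ 2 +
      ‖L.orthogonalProjectionOnto (x - y)‖ ^ 2) ≤ ‖x - y‖ :=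
    (Real.sqrt_le_left (norm_nonneg _)).2 (sq_norm_orthogonalProjectionOnto_add_sq_norm_le hL _)
  exact (Real.sqrt_sq_add_sq_le_of_le_add (hd₀ _ (coe_mem _)) (norm_nonneg _) hK hL').trans
    (add_le_add_right hxy _)

end Submodule

theorem stmt17_general {H : Type*} [NormedAddCommGroup H] [InnerProductSpace ℝ H]
    (H0 H1 H2 : Submodule ℝ H)
    [CompleteSpace H0] [CompleteSpace H1] [CompleteSpace H2]
    [CompleteSpace ↥(H1 ⊓ H0ᗮ)] [CompleteSpace ↥(H2 ⊓ H0ᗮ)]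
    (h01 : H0 ≤ H1) (h02 : H0 ≤ H2)
    (horth : ∀ x ∈ H1 ⊓ H0ᗮ, ∀ y ∈ H2 ⊓ H0ᗮ, ⟪x, y⟫ = 0)
    (d1 d2 : H → ℝ)
    (hr1 : ∀ x ∈ H1, d1 x ∈ Set.Icc (0 : ℝ) 1)
    (hr2 : ∀ x ∈ H2, d2 x ∈ Set.Icc (0 : ℝ) 1)
    (ax2_1 : ∀ x ∈ H1, ∀ y ∈ H1, d1 y ≤ d1 x + ‖x - y‖)
    (ax2_2 : ∀ x ∈ H2, ∀ y ∈ H2, d2 y ≤ d2 x + ‖x - y‖)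
    (d3 : H → ℝ)
    (hd3 : ∀ v ∈ (H1 ⊔ H2).topologicalClosure,
      d3 v = min
        (Real.sqrt (d1 ((Submodule.orthogonalProjectionOnto H1 v : H)) ^ 2 +
          ‖(Submodule.orthogonalProjectionOnto (H2 ⊓ H0ᗮ) v : H)‖ ^ 2))
        (Real.sqrt (d2 ((Submodule.orthogonalProjectionOnto H2 v : H)) ^ 2 +
          ‖(Submodule.orthogonalProjectionOnto (H1 ⊓ H0ᗮ) v : H)‖ ^ 2))) :
    ∀ x ∈ (H1 ⊔ H2).topologicalClosure, ∀ y ∈ (H1 ⊔ H2).topologicalClosure,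
      d3 y ≤ d3 x + ‖x - y‖ := by
  intro x hx y hy
  have hortho : H1 ⊓ H0ᗮ ⟂ H2 ⊓ H0ᗮ := Submodule.isOrtho_iff_inner_eq.2 horth
  have hperp1 : H2 ⊓ H0ᗮ ≤ H1ᗮ :=
    Submodule.le_orthogonal_of_isOrtho_inf_orthogonal h01 inf_le_right hortho
  have hperp2 : H1 ⊓ H0ᗮ ≤ H2ᗮ :=
    Submodule.le_orthogonal_of_isOrtho_inf_orthogonal h02 inf_le_right hortho.symm
  rw [hd3 x hx, hd3 y hy, ← min_add_add_right]
  exact min_le_min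
    (Submodule.sqrt_sq_add_sq_norm_orthogonalProjectionOnto_le hperp1
      (fun v hv ↦ (hr1 v hv).1) ax2_1 x y)
    (Submodule.sqrt_sq_add_sq_norm_orthogonalProjectionOnto_le hperp2
      (fun v hv ↦ (hr2 v hv).1) ax2_2 x y)

/-- The amalgamated distance function `d₃` satisfies axiom (2) (the 1-Lipschitz condition)
on the closure `H₃` of `H₁ + H₂`. -/
theorem stmt17 {H : Type*} [NormedAddCommGroup H] [InnerProductSpace ℝ H] [CompleteSpace H]
    (H0 H1 H2 : Submodule ℝ H)
    [CompleteSpace H0] [CompleteSpace H1] [CompleteSpace H2]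
    [CompleteSpace ↥(H1 ⊓ H0ᗮ)] [CompleteSpace ↥(H2 ⊓ H0ᗮ)]
    (h01 : H0 ≤ H1) (h02 : H0 ≤ H2)
    (horth : ∀ x ∈ H1 ⊓ H0ᗮ, ∀ y ∈ H2 ⊓ H0ᗮ, ⟪x, y⟫ = 0)
    (d1 d2 : H → ℝ)
    (hr1 : ∀ x ∈ H1, d1 x ∈ Set.Icc (0 : ℝ) 1)
    (hr2 : ∀ x ∈ H2, d2 x ∈ Set.Icc (0 : ℝ) 1)
    (ax2_1 : ∀ x ∈ H1, ∀ y ∈ H1, d1 y ≤ d1 x + ‖x - y‖)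
    (ax2_2 : ∀ x ∈ H2, ∀ y ∈ H2, d2 y ≤ d2 x + ‖x - y‖)
    (d3 : H → ℝ)
    (hd3 : ∀ v ∈ (H1 ⊔ H2).topologicalClosure,
      d3 v = min
        (Real.sqrt (d1 ((Submodule.orthogonalProjectionOnto H1 v : H)) ^ 2 +
          ‖(Submodule.orthogonalProjectionOnto (H2 ⊓ H0ᗮ) v : H)‖ ^ 2))
        (Real.sqrt (d2 ((Submodule.orthogonalProjectionOnto H2 v : H)) ^ 2 +
          ‖(Submodule.orthogonalProjectionOnto (H1 ⊓ H0ᗮ) v : H)‖ ^ 2))) :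
    ∀ x ∈ (H1 ⊔ H2).topologicalClosure, ∀ y ∈ (H1 ⊔ H2).topologicalClosure,
      d3 y ≤ d3 x + ‖x - y‖ :=
  stmt17_general H0 H1 H2 h01 h02 horth d1 d2 hr1 hr2 ax2_1 ax2_2 d3 hd3
end
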